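/- arXiv:1806.08381 — 11 statements merged into one kernel-verified Lean document; each statement's English description precedes it below -/
import Mathlib

section
/- A lattice L is distributive if and only if it is lattice-isomorphic to a sublattice of a Boolean algebra (i.e., there is an injective lattice homomorphism from L into some Boolean algebra). -/
/-- A lattice is distributive iff it embeds (as a lattice) into some Boolean algebra. -/
theorem distrib_iff_embeds_in_booleanAlgebra {L : Type u} [Lattice L] :
    (∀ a b c : L, a ⊓ (b ⊔ c) = (a ⊓ b) ⊔ (a ⊓ c)) ↔
      ∃ (B : Type u) (_ : BooleanAlgebra B) (f : LatticeHom L B), Function.Injective f := by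
  constructor
  · intro h
    letI : DistribLattice L := DistribLattice.ofInfSupLe fun a b c => (h a b c).le
    -- embed into the bounded distributive lattice α
    set α := WithTop (WithBot L) with hα
    let e : L → α := fun a => ((a : WithBot L) : α)
    have he_inf : ∀ a b : L, e (a ⊓ b) = e a ⊓ e b := by
      intro a b; simp only [e, WithBot.coe_inf, WithTop.coe_inf]
    have he_sup : ∀ a b : L, e (a ⊔ b) = e a ⊔ e b := by
      intro a b; simp only [e, WithBot.coe_sup, WithTop.coe_sup]
    have he_le : ∀ a b : L, e a ≤ e b ↔ a ≤ b := by
      intro a b; exact WithTop.coe_le_coe.trans WithBot.coe_le_coe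
    -- the Boolean algebra of sets of prime ideals
    refine ⟨Set {J : Order.Ideal α // J.IsPrime}, inferInstance,
      ⟨⟨fun a => {J | e a ∉ J.1}, ?_⟩, ?_⟩, ?_⟩
    · intro a b
      ext J
      simp only [Set.mem_setOf_eq, Set.sup_eq_union, Set.mem_union, he_sup]
      constructor
      · intro hab
        by_contra hc
        push_neg at hc
        exact hab (Order.Ideal.sup_mem hc.1 hc.2)
      · rintro (ha | hb) hab
        · exact ha (J.1.lower le_sup_left hab)
        · exact hb (J.1.lower le_sup_right hab)
    · intro a b
      ext J
      have hp : J.1.IsPrime := J.2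
      simp only [Set.mem_setOf_eq, Set.mem_inter_iff, he_sup, he_inf]
      constructor
      · intro hab
        constructor
        · exact fun ha => hab (J.1.lower inf_le_left ha)
        · exact fun hb => hab (J.1.lower inf_le_right hb)
      · rintro ⟨ha, hb⟩ hab
        rcases hp.mem_or_mem hab with h' | h' <;> tauto
    · -- injectivity
      have key : ∀ a b : L, ¬ a ≤ b → ∃ J : {J : Order.Ideal α // J.IsPrime},
          e a ∉ J.1 ∧ e b ∈ J.1 := by
        intro a b hab
        have hdisj : Disjoint ((Order.PFilter.principal (e a) : Order.PFilter α) : Set α)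
            ((Order.Ideal.principal (e b) : Order.Ideal α) : Set α) := by
          rw [Set.disjoint_left]
          intro x hx hx'
          have h1 : e a ≤ x := hx
          have h2 : x ≤ e b := hx'
          exact hab ((he_le a b).mp (h1.trans h2))
        obtain ⟨J, hJp, hIJ, hJF⟩ :=
          DistribLattice.prime_ideal_of_disjoint_filter_ideal hdisj
        refine ⟨⟨J, hJp⟩, ?_, ?_⟩
        · intro haJ
          exact Set.disjoint_left.mp hJF (Order.PFilter.mem_principal.mpr le_rfl) haJ
        · exact hIJ (Order.Ideal.mem_principal.mpr le_rfl)
      intro a b hfab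
      have hle : ∀ x y : L, ({J : {J : Order.Ideal α // J.IsPrime} | e x ∉ J.1} : Set _) =
          {J | e y ∉ J.1} → x ≤ y := by
        intro x y hxy
        by_contra hc
        obtain ⟨J, hxJ, hyJ⟩ := key x y hc
        have : J ∈ {J : {J : Order.Ideal α // J.IsPrime} | e y ∉ J.1} := hxy ▸ hxJ
        exact this hyJ
      simp only [LatticeHom.coe_mk, SupHom.coe_mk] at hfab
      exact le_antisymm (hle a b hfab) (hle b a hfab.symm)
  · rintro ⟨B, hB, f, hf⟩ a b c
    apply hf
    simp only [map_inf, map_sup, inf_sup_left]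
end

section
/- Let L be a linearly ordered set. If L is order-isomorphic to a subset of the real line, then for every uncountable family of triples {(x₁ⁱ, x₂ⁱ, x₃ⁱ) : i ∈ J} with x₁ⁱ < x₂ⁱ < x₃ⁱ in L, there exist i ≠ j such that x₁ⁱ ≤ x₂ʲ ≤ x₃ⁱ and x₁ʲ ≤ x₂ⁱ ≤ x₃ʲ. -/
/-- If a linear order embeds into the real line, then every uncountable family of increasing
triples contains two "interlocking" triples. -/
theorem triples_interlock_of_embeds_real {L : Type*} [LinearOrder L]
    (f : L → ℝ) (hf : StrictMono f)
    {J : Type*} [Uncountable J] (x₁ x₂ x₃ : J → L)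
    (hx : ∀ i, x₁ i < x₂ i ∧ x₂ i < x₃ i) :
    ∃ i j, i ≠ j ∧ (x₁ i ≤ x₂ j ∧ x₂ j ≤ x₃ i) ∧ (x₁ j ≤ x₂ i ∧ x₂ i ≤ x₃ j) := by
  have hpick : ∀ i : J, ∃ pq : ℚ × ℚ,
      f (x₁ i) < (pq.1 : ℝ) ∧ (pq.1 : ℝ) < f (x₂ i) ∧
      f (x₂ i) < (pq.2 : ℝ) ∧ (pq.2 : ℝ) < f (x₃ i) := by
    intro i
    obtain ⟨p, hp1, hp2⟩ := exists_rat_btwn (hf (hx i).1)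
    obtain ⟨q, hq1, hq2⟩ := exists_rat_btwn (hf (hx i).2)
    exact ⟨(p, q), hp1, hp2, hq1, hq2⟩
  choose g hg using hpick
  have : ¬ Function.Injective g := fun hinj =>
    not_countable (Function.Injective.countable hinj)
  rw [Function.not_injective_iff] at this
  obtain ⟨i, j, hgij, hij⟩ := this
  refine ⟨i, j, hij, ?_, ?_⟩
  · constructor
    · have : f (x₁ i) < f (x₂ j) :=
        lt_trans (hg i).1 (by rw [hgij]; exact (hg j).2.1)
      exact (hf.lt_iff_lt.mp this).le
    · have : f (x₂ j) < f (x₃ i) :=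
        lt_trans (hg j).2.2.1 (by rw [← hgij]; exact (hg i).2.2.2)
      exact (hf.lt_iff_lt.mp this).le
  · constructor
    · have : f (x₁ j) < f (x₂ i) :=
        lt_trans (hg j).1 (by rw [← hgij]; exact (hg i).2.1)
      exact (hf.lt_iff_lt.mp this).le
    · have : f (x₂ i) < f (x₃ j) :=
        lt_trans (hg i).2.2.1 (by rw [hgij]; exact (hg j).2.2.2)
      exact (hf.lt_iff_lt.mp this).le
end

section
/- Let L be a linearly ordered set with the property that for every uncountable family of triples {(x₁ⁱ, x₂ⁱ, x₃ⁱ) : i ∈ J} with x₁ⁱ < x₂ⁱ < x₃ⁱ there exist i ≠ j with x₁ⁱ ≤ x₂ʲ ≤ x₃ⁱ and x₁ʲ ≤ x₂ⁱ ≤ x₃ʲ. Then the set of leaps {(a,b) ∈ L² : a < b and there is no c with a < c < b} is countable. -/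
/-- If every uncountable family of increasing triples in `L` contains two interlocking triples,
then the set of leaps of `L` is countable. -/
theorem countable_leaps_of_triple_property {L : Type u} [LinearOrder L]
    (H : ∀ (J : Type u) [Uncountable J] (x₁ x₂ x₃ : J → L),
      (∀ i, x₁ i < x₂ i ∧ x₂ i < x₃ i) →
      ∃ i j, i ≠ j ∧ (x₁ i ≤ x₂ j ∧ x₂ j ≤ x₃ i) ∧ (x₁ j ≤ x₂ i ∧ x₂ i ≤ x₃ j)) :
    {p : L × L | p.1 < p.2 ∧ ∀ c, ¬(p.1 < c ∧ c < p.2)}.Countable := by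
  by_contra hS
  set S : Set (L × L) := {p : L × L | p.1 < p.2 ∧ ∀ c, ¬(p.1 < c ∧ c < p.2)} with hSdef
  -- uniqueness of leap with a given left endpoint
  have huniq1 : ∀ p ∈ S, ∀ q ∈ S, p.1 = q.1 → p = q := by
    intro p hp q hq h
    rcases lt_trichotomy p.2 q.2 with h2 | h2 | h2
    · exact absurd ⟨h ▸ hp.1, h2⟩ (hq.2 p.2)
    · exact Prod.ext h h2
    · exact absurd ⟨h ▸ hq.1, h2⟩ (hp.2 q.2)
  -- uniqueness of leap with a given right endpoint
  have huniq2 : ∀ p ∈ S, ∀ q ∈ S, p.2 = q.2 → p = q := by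
    intro p hp q hq h
    rcases lt_trichotomy p.1 q.1 with h1 | h1 | h1
    · exact absurd ⟨h1, h ▸ hq.1⟩ (hp.2 q.1)
    · exact Prod.ext h1 h
    · exact absurd ⟨h1, h ▸ hp.1⟩ (hq.2 p.1)
  -- disjointness of leaps
  have hdisj : ∀ p ∈ S, ∀ q ∈ S, p.1 < q.1 → p.2 ≤ q.1 := by
    intro p hp q hq h
    by_contra hlt
    exact hp.2 q.1 ⟨h, lt_of_not_ge hlt⟩
  -- Zorn: maximal "independent" set of leaps (no leap's right endpoint is another's left)
  set 𝒮 : Set (Set (L × L)) := {T | T ⊆ S ∧ ∀ p ∈ T, ∀ q ∈ T, p.2 ≠ q.1} with h𝒮def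
  obtain ⟨T, hTmax⟩ : ∃ T, Maximal (· ∈ 𝒮) T := by
    apply zorn_subset
    intro c hc hchain
    refine ⟨⋃₀ c, ⟨?_, ?_⟩, fun s hs => Set.subset_sUnion_of_mem hs⟩
    · intro x hx
      obtain ⟨t, htc, hxt⟩ := hx
      exact (hc htc).1 hxt
    · rintro p ⟨t1, ht1, hp⟩ q ⟨t2, ht2, hq⟩
      rcases hchain.total ht1 ht2 with hsub | hsub
      · exact (hc ht2).2 p (hsub hp) q hq
      · exact (hc ht1).2 p hp q (hsub hq)
  have hTS : T ⊆ S := hTmax.prop.1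
  have hTind : ∀ p ∈ T, ∀ q ∈ T, p.2 ≠ q.1 := hTmax.prop.2
  -- T is uncountable
  have hTc : ¬ T.Countable := by
    intro hTc
    apply hS
    have cover : S ⊆ T ∪ ((⋃ p ∈ T, {q ∈ S | q.1 = p.2}) ∪ (⋃ p ∈ T, {q ∈ S | q.2 = p.1})) := by
      intro q hq
      by_cases h1 : q ∈ T
      · exact Or.inl h1
      by_cases h2 : ∃ p ∈ T, q.1 = p.2
      · obtain ⟨p, hp, e⟩ := h2
        exact Or.inr (Or.inl (Set.mem_biUnion hp ⟨hq, e⟩))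
      by_cases h3 : ∃ p ∈ T, q.2 = p.1
      · obtain ⟨p, hp, e⟩ := h3
        exact Or.inr (Or.inr (Set.mem_biUnion hp ⟨hq, e⟩))
      exfalso
      push_neg at h2 h3
      have hins : insert q T ∈ 𝒮 := by
        constructor
        · exact Set.insert_subset hq hTS
        · rintro p (rfl | hp) r (rfl | hr)
          · exact ne_of_gt hq.1
          · exact h3 r hr
          · exact fun e => h2 p hp e.symm
          · exact hTind p hp r hr
      exact h1 (hTmax.2 hins (Set.subset_insert q T) (Set.mem_insert q T))
    refine Set.Countable.mono cover (hTc.union (Set.Countable.union ?_ ?_))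
    · refine hTc.biUnion fun p _ => Set.Subsingleton.countable ?_
      rintro q ⟨hqS, hq⟩ r ⟨hrS, hr⟩
      exact huniq1 q hqS r hrS (hq.trans hr.symm)
    · refine hTc.biUnion fun p _ => Set.Subsingleton.countable ?_
      rintro q ⟨hqS, hq⟩ r ⟨hrS, hr⟩
      exact huniq2 q hqS r hrS (hq.trans hr.symm)
  -- drop the (at most one) leap whose right endpoint is the maximum of L
  set T' : Set (L × L) := {p ∈ T | ∃ x, p.2 < x} with hT'def
  have hT'c : ¬ T'.Countable := by
    intro hT'c
    apply hTc
    have : T ⊆ T' ∪ (T \ T') := fun p hp => by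
      by_cases h : p ∈ T'
      · exact Or.inl h
      · exact Or.inr ⟨hp, h⟩
    refine Set.Countable.mono this (hT'c.union (Set.Subsingleton.countable ?_))
    rintro p ⟨hpT, hp⟩ q ⟨hqT, hq⟩
    have hp' : ∀ x, ¬ p.2 < x := by
      intro x hx; exact hp ⟨hpT, x, hx⟩
    have hq' : ∀ x, ¬ q.2 < x := by
      intro x hx; exact hq ⟨hqT, x, hx⟩
    exact huniq2 p (hTS hpT) q (hTS hqT)
      (le_antisymm (not_lt.mp (hq' p.2)) (not_lt.mp (hp' q.2)))
  have : Uncountable ↥T' := by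
    rw [← not_countable_iff]
    rwa [Set.countable_coe_iff]
  -- choice of a point above each leap in T'
  have hch : ∀ i : ↥T', ∃ x, (i : L × L).2 < x := fun i => i.2.2
  choose c hc using hch
  have hiS : ∀ i : ↥T', (i : L × L) ∈ S := fun i => hTS i.2.1
  obtain ⟨i, j, hij, ⟨h1, h2⟩, ⟨h3, h4⟩⟩ :=
    H ↥T' (fun i => (i : L × L).1) (fun i => (i : L × L).2) c
      (fun i => ⟨(hiS i).1, hc i⟩)
  have hne : (i : L × L) ≠ (j : L × L) := fun e => hij (Subtype.coe_injective e)
  have hne1 : (i : L × L).1 ≠ (j : L × L).1 :=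
    fun e => hne (huniq1 _ (hiS i) _ (hiS j) e)
  rcases hne1.lt_or_gt with hlt | hlt
  · exact hTind _ i.2.1 _ j.2.1 (le_antisymm (hdisj _ (hiS i) _ (hiS j) hlt) h3)
  · exact hTind _ j.2.1 _ i.2.1 (le_antisymm (hdisj _ (hiS j) _ (hiS i) hlt) h1)
end

section
/- A linearly ordered set L is order-isomorphic to a subset of the real line if and only if L is separable in the order topology and the set of leaps {(a,b) ∈ L² : a < b, (a,b) = ∅} is countable. -/
open Set TopologicalSpace

section Lemmas
variable {L : Type*} [LinearOrder L]

theorem aux_embed {D : Set L} (hDc : D.Countable) (hDne : D.Nonempty)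
    (key : ∀ a b : L, a < b → ∃ d ∈ D, a ≤ d ∧ d < b) : ∃ f : L → ℝ, StrictMono f := by
  obtain ⟨e, he⟩ := hDc.exists_eq_range hDne
  refine ⟨fun x => ∑' n : ℕ, if e n < x then ((1:ℝ)/2)^n else 0, ?_⟩
  have hsum : ∀ x : L, Summable (fun n : ℕ => if e n < x then ((1:ℝ)/2)^n else 0) := by
    intro x
    refine Summable.of_nonneg_of_le (fun n => ?_) (fun n => ?_) summable_geometric_two
    · split <;> positivity
    · split
      · exact le_rfl
      · positivity
  intro x y hxy
  obtain ⟨d, hdD, hxd, hdy⟩ := key x y hxy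
  rw [he] at hdD
  obtain ⟨n0, hn0⟩ := hdD
  refine Summable.tsum_lt_tsum_of_nonneg (i := n0) (fun n => ?_) (fun n => ?_) ?_ (hsum y)
  · split <;> positivity
  · by_cases h : e n < x
    · rw [if_pos h, if_pos (h.trans hxy)]
    · rw [if_neg h]; split <;> positivity
  · subst hn0
    rw [if_neg (not_lt.2 hxd), if_pos hdy]
    positivity

/-- a linear order with a strictly monotone map to ℝ is separable in the order topology -/
theorem aux_sep [TopologicalSpace L] [OrderTopology L] {f : L → ℝ} (hf : StrictMono f) :
    SeparableSpace L := by
  set S := Set.range f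
  -- countable dense set in the subspace topology of S
  obtain ⟨c, hcc, hcd⟩ := exists_countable_dense S
  -- switch to the order topology on S
  letI ts : TopologicalSpace S := Preorder.topology S
  haveI hot : OrderTopology S := ⟨rfl⟩
  have hle : instTopologicalSpaceSubtype ≤ ts := by
    refine le_generateFrom ?_
    rintro U ⟨a, rfl | rfl⟩
    · exact isOpen_induced (isOpen_lt' (a : ℝ)) |>.mono le_rfl |>.mono le_rfl
    · exact isOpen_induced (isOpen_gt' (a : ℝ))
  have hcd' : @Dense S ts c := by
    rw [@dense_iff_inter_open]
    intro U hU hUne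
    exact (@dense_iff_inter_open S instTopologicalSpaceSubtype c).1 hcd U (hle U hU) hUne
  haveI : @SeparableSpace S ts := ⟨⟨c, hcc, hcd'⟩⟩
  let e : L ≃o S := hf.orderIso f
  have h : S ≃ₜ L := e.symm.toHomeomorph
  exact (h.surjective.denseRange).separableSpace h.continuous

end Lemmas

/-- A linear order is order-isomorphic to a subset of ℝ iff it is separable in the order
topology and has countably many leaps. -/
theorem embeds_real_iff_separable_and_countable_leaps {L : Type*} [LinearOrder L]
    [TopologicalSpace L] [OrderTopology L] :
    (∃ f : L → ℝ, StrictMono f) ↔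
      (TopologicalSpace.SeparableSpace L ∧
        {p : L × L | p.1 < p.2 ∧ ∀ c, ¬(p.1 < c ∧ c < p.2)}.Countable) := by
  constructor
  · rintro ⟨f, hf⟩
    refine ⟨aux_sep hf, ?_⟩
    set T := {p : L × L | p.1 < p.2 ∧ ∀ c, ¬(p.1 < c ∧ c < p.2)} with hT
    rw [← Set.countable_coe_iff]
    have g : ∀ p : T, {q : ℚ // f (p : L × L).1 < (q : ℝ) ∧ (q : ℝ) < f (p : L × L).2} := by
      rintro ⟨p, hp1, _⟩
      have := exists_rat_btwn (hf hp1)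
      exact ⟨this.choose, this.choose_spec⟩
    have hinj : Function.Injective (fun p : T => (g p : ℚ)) := by
      rintro ⟨⟨a, b⟩, hab, hleap⟩ ⟨⟨a', b'⟩, hab', hleap'⟩ hq
      obtain ⟨h1, h2⟩ := (g ⟨⟨a, b⟩, hab, hleap⟩).2
      obtain ⟨h1', h2'⟩ := (g ⟨⟨a', b'⟩, hab', hleap'⟩).2
      simp only at hq
      rw [hq] at h1 h2
      -- now f a' < q < f b' and f a < q < f b with shared q
      have haa : a = a' := by
        rcases lt_trichotomy a a' with h | h | h
        · have : b ≤ a' := not_lt.1 fun hc => hleap a' ⟨h, hc⟩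
          exact absurd (h2.trans_le (hf.monotone this)) (not_lt.2 h1'.le)
        · exact h
        · have : b' ≤ a := not_lt.1 fun hc => hleap' a ⟨h, hc⟩
          exact absurd (h2'.trans_le (hf.monotone this)) (not_lt.2 h1.le)
      subst haa
      have hbb : b = b' := by
        rcases lt_trichotomy b b' with h | h | h
        · exact absurd ⟨hab, h⟩ (hleap' b)
        · exact h
        · exact absurd ⟨hab', h⟩ (hleap b')
      simp [hbb]
    exact hinj.countable
  · rintro ⟨hsep, hleap⟩
    by_cases htriv : ∀ x y : L, ¬ x < y
    · exact ⟨fun _ => 0, fun x y h => absurd h (htriv x y)⟩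
    push_neg at htriv
    obtain ⟨x0, y0, hxy0⟩ := htriv
    obtain ⟨s, hsc, hsd⟩ := exists_countable_dense L
    set D : Set L := s ∪ (Prod.fst '' {p : L × L | p.1 < p.2 ∧ ∀ c, ¬(p.1 < c ∧ c < p.2)})
      with hD
    have hDc : D.Countable := hsc.union (hleap.image _)
    have key : ∀ a b : L, a < b → ∃ d ∈ D, a ≤ d ∧ d < b := by
      intro a b hab
      by_cases h : ∃ c, a < c ∧ c < b
      · obtain ⟨x, hx, hxs⟩ := hsd.inter_open_nonempty (Ioo a b) isOpen_Ioo
          ⟨h.choose, h.choose_spec⟩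
        exact ⟨x, Or.inl hxs, hx.1.le, hx.2⟩
      · push_neg at h
        exact ⟨a, Or.inr ⟨(a, b), ⟨hab, fun c hc => (h c hc.1).not_gt hc.2⟩, rfl⟩,
          le_rfl, hab⟩
    obtain ⟨d0, hd0, _, _⟩ := key x0 y0 hxy0
    exact aux_embed hDc ⟨d0, hd0⟩ key
end

section
/- Let L be a linearly ordered set and let L* denote the set of all monotone nondecreasing functions x* : L → [-1,1]. For u ∈ L let δ_u : L* → ℝ be the evaluation δ_u(x*) = x*(u). Given u₁ < … < u_m in L and reals a₁, …, a_m, define ‖f‖_* = sup { Σ_{j=1}^n |f(x_j*)| : n ∈ ℕ, x_1*, …, x_n* ∈ L*, sup_{x ∈ L} Σ_{j=1}^n |x_j*(x)| ≤ 1 }. Then ‖Σᵢ aᵢ δ_{uᵢ}‖_* ≤ 6 · max_{1 ≤ k ≤ m} |Σ_{i=1}^k aᵢ|. -/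
open Finset in
private lemma partial_sum_eq {m : ℕ} (a : Fin m → ℝ) (k : Fin m) :
    ∑ i ∈ Finset.range (k.val + 1), (if h : i < m then a ⟨i, h⟩ else 0) =
      ∑ i ∈ Finset.univ.filter (fun i => i ≤ k), a i := by
  refine Finset.sum_nbij' (fun i => if h : i < m then (⟨i, h⟩ : Fin m) else k)
    (fun i => i.val) ?_ ?_ ?_ ?_ ?_
  · intro i hi
    have hik : i ≤ k.val := Nat.lt_succ_iff.mp (Finset.mem_range.mp hi)
    have him : i < m := lt_of_le_of_lt hik k.isLt
    simp only [dif_pos him, Finset.mem_filter, Finset.mem_univ, true_and]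
    exact hik
  · intro i hi
    have := (Finset.mem_filter.mp hi).2
    exact Finset.mem_range.mpr (Nat.lt_succ_iff.mpr this)
  · intro i hi
    have hik : i ≤ k.val := Nat.lt_succ_iff.mp (Finset.mem_range.mp hi)
    have him : i < m := lt_of_le_of_lt hik k.isLt
    simp [dif_pos him]
  · intro i hi; simp
  · intro i hi
    have hik : i ≤ k.val := Nat.lt_succ_iff.mp (Finset.mem_range.mp hi)
    have him : i < m := lt_of_le_of_lt hik k.isLt
    simp [dif_pos him]

open Finset in
/-- Upper estimate: `‖Σ aᵢ δ_{uᵢ}‖_* ≤ 6 · max_k |a₁ + ⋯ + a_k|` (summing basis of c₀). -/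
theorem fbl_linear_norm_le_six_summing {L : Type*} [LinearOrder L]
    {m : ℕ} (hm : 0 < m) (u : Fin m → L) (hu : StrictMono u) (a : Fin m → ℝ) :
    sSup {s : ℝ | ∃ (n : ℕ) (xs : Fin n → L → ℝ),
        (∀ j, Monotone (xs j)) ∧ (∀ j, ∀ x, xs j x ∈ Set.Icc (-1 : ℝ) 1) ∧
        (∀ x : L, ∑ j, |xs j x| ≤ 1) ∧
        s = ∑ j, |∑ i, a i * xs j (u i)|} ≤
      6 * (Finset.univ.sup' (Finset.univ_nonempty_iff.mpr ⟨⟨0, hm⟩⟩)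
        fun k : Fin m => |∑ i ∈ Finset.univ.filter fun i => i ≤ k, a i|) := by
  set M : ℝ := Finset.univ.sup' (Finset.univ_nonempty_iff.mpr ⟨⟨0, hm⟩⟩)
      fun k : Fin m => |∑ i ∈ Finset.univ.filter fun i => i ≤ k, a i| with hMdef
  have hMk : ∀ k : Fin m, |∑ i ∈ Finset.univ.filter fun i => i ≤ k, a i| ≤ M :=
    fun k => Finset.le_sup' (fun k : Fin m => |∑ i ∈ Finset.univ.filter fun i => i ≤ k, a i|) (Finset.mem_univ k)
  have hM0 : 0 ≤ M := le_trans (abs_nonneg _) (hMk ⟨0, hm⟩)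
  apply Real.sSup_le
  · rintro s ⟨n, xs, hmono, hIcc, hsum, rfl⟩
    -- notation
    have hm1 : m - 1 < m := Nat.sub_lt hm one_pos
    set z : Fin m := ⟨0, hm⟩ with hz
    set w : Fin m := ⟨m - 1, hm1⟩ with hw
    set A : ℕ → ℝ := fun i => if h : i < m then a ⟨i, h⟩ else 0 with hA
    -- key pointwise estimate
    have key : ∀ j, |∑ i, a i * xs j (u i)| ≤
        M * (xs j (u w) - xs j (u z)) + M * |xs j (u w)| := by
      intro j
      set B : ℕ → ℝ := fun i => if h : i < m then xs j (u ⟨i, h⟩) else 0 with hB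
      have hBmono : ∀ i i' : ℕ, i ≤ i' → i' < m → B i ≤ B i' := by
        intro i i' hii hi'
        have hi : i < m := lt_of_le_of_lt hii hi'
        simp only [hB, dif_pos hi, dif_pos hi']
        exact hmono j (hu.monotone (by exact hii))
      have hsum_eq : ∑ i, a i * xs j (u i) = ∑ i ∈ Finset.range m, B i • A i := by
        rw [← Fin.sum_univ_eq_sum_range (fun i => B i • A i) m]
        refine Finset.sum_congr rfl fun i _ => ?_
        simp only [hA, hB, dif_pos i.isLt, smul_eq_mul]
        ring
      rw [hsum_eq, Finset.sum_range_by_parts]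
      have hSle : ∀ i : ℕ, i < m → |∑ k ∈ Finset.range (i + 1), A k| ≤ M := by
        intro i hi
        calc |∑ k ∈ Finset.range (i + 1), A k|
            = |∑ k ∈ Finset.univ.filter fun k => k ≤ (⟨i, hi⟩ : Fin m), a k| := by
              rw [partial_sum_eq a ⟨i, hi⟩]
          _ ≤ M := hMk _
      have hBw : B (m - 1) = xs j (u w) := by simp [hB, dif_pos hm1, hw]
      have hBz : B 0 = xs j (u z) := by simp [hB, dif_pos hm, hz]
      have hGm : ∑ k ∈ Finset.range ((m - 1) + 1), A k = ∑ k ∈ Finset.range m, A k := by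
        rw [Nat.sub_add_cancel hm]
      calc |B (m - 1) • (∑ k ∈ Finset.range m, A k) -
              ∑ i ∈ Finset.range (m - 1), (B (i + 1) - B i) • (∑ k ∈ Finset.range (i + 1), A k)|
          ≤ |B (m - 1) • (∑ k ∈ Finset.range m, A k)| +
              |∑ i ∈ Finset.range (m - 1), (B (i + 1) - B i) • (∑ k ∈ Finset.range (i + 1), A k)| :=
            abs_sub _ _
        _ ≤ M * |xs j (u w)| + M * (xs j (u w) - xs j (u z)) := by
            gcongr ?_ + ?_
            · rw [smul_eq_mul, abs_mul, hBw, mul_comm]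
              have := hSle (m - 1) hm1
              rw [hGm] at this
              exact mul_le_mul_of_nonneg_right this (abs_nonneg _)
            · calc |∑ i ∈ Finset.range (m - 1), (B (i + 1) - B i) • (∑ k ∈ Finset.range (i + 1), A k)|
                  ≤ ∑ i ∈ Finset.range (m - 1), |(B (i + 1) - B i) • (∑ k ∈ Finset.range (i + 1), A k)| :=
                    Finset.abs_sum_le_sum_abs _ _
                _ ≤ ∑ i ∈ Finset.range (m - 1), (B (i + 1) - B i) * M := by
                    refine Finset.sum_le_sum fun i hi => ?_
                    have hi1 : i + 1 < m := by
                      have := Finset.mem_range.mp hi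
                      omega
                    have hBd : 0 ≤ B (i + 1) - B i :=
                      sub_nonneg.mpr (hBmono i (i + 1) (Nat.le_succ i) hi1)
                    rw [smul_eq_mul, abs_mul, abs_of_nonneg hBd]
                    exact mul_le_mul_of_nonneg_left (hSle i (lt_trans (Nat.lt_succ_self i) hi1)) hBd
                _ = (B (m - 1) - B 0) * M := by rw [← Finset.sum_mul, Finset.sum_range_sub B (m - 1)]
                _ = M * (xs j (u w) - xs j (u z)) := by rw [hBw, hBz]; ring
        _ = M * (xs j (u w) - xs j (u z)) + M * |xs j (u w)| := by ring
    calc ∑ j, |∑ i, a i * xs j (u i)|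
        ≤ ∑ j, (M * (xs j (u w) - xs j (u z)) + M * |xs j (u w)|) :=
          Finset.sum_le_sum fun j _ => key j
      _ = M * (∑ j, (xs j (u w) - xs j (u z))) + M * ∑ j, |xs j (u w)| := by
          rw [Finset.sum_add_distrib, ← Finset.mul_sum, ← Finset.mul_sum]
      _ ≤ M * 2 + M * 1 := by
          gcongr
          · calc ∑ j, (xs j (u w) - xs j (u z))
                ≤ ∑ j, (|xs j (u w)| + |xs j (u z)|) := by
                  refine Finset.sum_le_sum fun j _ => ?_
                  have h1 := le_abs_self (xs j (u w))
                  have h2 := neg_abs_le (xs j (u z))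
                  linarith
              _ = (∑ j, |xs j (u w)|) + ∑ j, |xs j (u z)| := Finset.sum_add_distrib
              _ ≤ 1 + 1 := add_le_add (hsum _) (hsum _)
              _ = 2 := by norm_num
          · exact hsum _
      _ ≤ 6 * M := by linarith
  · linarith
end

section
/- Let L be a linearly ordered set and L* the set of monotone nondecreasing functions L → [-1,1], with δ_u(x*) = x*(u) and the norm ‖f‖_* = sup { Σ_{j=1}^n |f(x_j*)| : x_j* ∈ L*, sup_{x ∈ L} Σ_j |x_j*(x)| ≤ 1 }. Then for u₁ < … < u_m in L and reals a₁, …, a_m, one has max_{1 ≤ k ≤ m} |Σ_{i=1}^k aᵢ| ≤ ‖Σ_{i=1}^m aᵢ δ_{uᵢ}‖_*. -/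
open Finset in
/-- Lower estimate: `max_k |a₁ + ⋯ + a_k| ≤ ‖Σ aᵢ δ_{uᵢ}‖_*` (summing basis of c₀). -/
theorem summing_le_fbl_linear_norm {L : Type*} [LinearOrder L]
    {m : ℕ} (hm : 0 < m) (u : Fin m → L) (hu : StrictMono u) (a : Fin m → ℝ) :
    (Finset.univ.sup' (Finset.univ_nonempty_iff.mpr ⟨⟨0, hm⟩⟩)
        fun k : Fin m => |∑ i ∈ Finset.univ.filter fun i => i ≤ k, a i|) ≤
      sSup {s : ℝ | ∃ (n : ℕ) (xs : Fin n → L → ℝ),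
        (∀ j, Monotone (xs j)) ∧ (∀ j, ∀ x, xs j x ∈ Set.Icc (-1 : ℝ) 1) ∧
        (∀ x : L, ∑ j, |xs j x| ≤ 1) ∧
        s = ∑ j, |∑ i, a i * xs j (u i)|} := by
  have hbdd : BddAbove {s : ℝ | ∃ (n : ℕ) (xs : Fin n → L → ℝ),
      (∀ j, Monotone (xs j)) ∧ (∀ j, ∀ x, xs j x ∈ Set.Icc (-1 : ℝ) 1) ∧
      (∀ x : L, ∑ j, |xs j x| ≤ 1) ∧
      s = ∑ j, |∑ i, a i * xs j (u i)|} := by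
    refine ⟨∑ i, |a i|, ?_⟩
    rintro s ⟨n, xs, hmono, hicc, hsum, rfl⟩
    calc ∑ j, |∑ i, a i * xs j (u i)|
        ≤ ∑ j, ∑ i, |a i * xs j (u i)| := by
          exact Finset.sum_le_sum fun j _ => Finset.abs_sum_le_sum_abs _ _
      _ = ∑ i, ∑ j, |a i| * |xs j (u i)| := by
          rw [Finset.sum_comm]; simp [abs_mul]
      _ ≤ ∑ i, |a i| * 1 := by
          refine Finset.sum_le_sum fun i _ => ?_
          rw [← Finset.mul_sum]
          exact mul_le_mul_of_nonneg_left (hsum (u i)) (abs_nonneg _)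
      _ = ∑ i, |a i| := by simp
  apply Finset.sup'_le
  intro k _
  apply le_csSup hbdd
  refine ⟨1, fun _ x => if x ≤ u k then -1 else 0, ?_, ?_, ?_, ?_⟩
  · intro j x y hxy
    dsimp only
    by_cases hy : y ≤ u k
    · simp [hxy.trans hy, hy]
    · split_ifs <;> norm_num
  · intro j x
    dsimp only
    split_ifs <;> norm_num
  · intro x
    simp only [Fin.sum_univ_one]
    split_ifs <;> norm_num
  · rw [Fin.sum_univ_one]
    have : ∑ i, a i * (if u i ≤ u k then (-1 : ℝ) else 0)
        = -(∑ i ∈ Finset.univ.filter fun i => i ≤ k, a i) := by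
      rw [← Finset.sum_neg_distrib, Finset.sum_filter]
      refine Finset.sum_congr rfl fun i _ => ?_
      simp only [hu.le_iff_le]
      split_ifs <;> ring
    rw [this, abs_neg]
end

section
/- Let L ⊆ M be linearly ordered sets with L nonempty, and let x₁*, …, x_n* : L → [-1,1] be nondecreasing functions with sup_{x ∈ L} Σ_{i=1}^n |x_i*(x)| ≤ 1. Define y_i* : M → [-1,1] by y_i*(x) = sup{x_i*(y) : y ∈ L, y ≤ x} if some y ∈ L satisfies y ≤ x, and y_i*(x) = inf{x_i*(y) : y ∈ L, y ≥ x} otherwise. Then sup_{x ∈ M} Σ_{i=1}^n |y_i*(x)| ≤ 1. -/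
/-- helper: if `a ≤ b` and `b ≤ a + e` then `|b| ≤ |a| + e`. -/
private lemma abs_le_abs_add_of_between {a b e : ℝ} (h1 : a ≤ b) (h2 : b ≤ a + e) :
    |b| ≤ |a| + e := by
  have h3 : |b| - |a| ≤ |b - a| := abs_sub_abs_le_abs_sub b a
  have h4 : |b - a| ≤ e := by rw [abs_of_nonneg (by linarith)]; linarith
  linarith

/-- If nondecreasing `x₁*, …, x_n* : L → [-1,1]` satisfy `sup_x Σ |xᵢ*(x)| ≤ 1` on a subset
`L ⊆ M`, then the canonical nondecreasing extensions `yᵢ*` to `M` satisfy the same bound. -/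
theorem sum_abs_extensions_le_one {M : Type*} [LinearOrder M]
    (L : Set M) (hL : L.Nonempty) {n : ℕ} (x : Fin n → L → ℝ)
    (hmono : ∀ i, Monotone (x i))
    (hrange : ∀ i, ∀ l : L, x i l ∈ Set.Icc (-1 : ℝ) 1)
    (hsum : ∀ l : L, ∑ i, |x i l| ≤ 1)
    (y : Fin n → M → ℝ)
    (hy₁ : ∀ i, ∀ v : M, ({l : L | (l : M) ≤ v}).Nonempty →
      y i v = sSup (x i '' {l : L | (l : M) ≤ v}))
    (hy₂ : ∀ i, ∀ v : M, ¬({l : L | (l : M) ≤ v}).Nonempty →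
      y i v = sInf (x i '' {l : L | v ≤ (l : M)})) :
    ∀ v : M, ∑ i, |y i v| ≤ 1 := by
  intro v
  rcases Nat.eq_zero_or_pos n with h0 | hn
  · subst h0; simp
  haveI : Nonempty (Fin n) := ⟨⟨0, hn⟩⟩
  apply le_of_forall_pos_le_add
  intro ε hε
  have hεn : 0 < ε / n := by positivity
  by_cases hS : ({l : L | (l : M) ≤ v}).Nonempty
  · -- sup case
    set S : Set L := {l : L | (l : M) ≤ v} with hSdef
    have hbdd : ∀ i : Fin n, BddAbove (x i '' S) :=
      fun i => ⟨1, by rintro _ ⟨l, _, rfl⟩; exact (hrange i l).2⟩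
    have key : ∀ i : Fin n, ∃ l : L, l ∈ S ∧ sSup (x i '' S) ≤ x i l + ε / n := by
      intro i
      have h1 : sSup (x i '' S) - ε / n < sSup (x i '' S) := by linarith
      obtain ⟨a, ⟨l, hl, rfl⟩, ha⟩ := exists_lt_of_lt_csSup (hS.image (x i)) h1
      exact ⟨l, hl, by linarith⟩
    choose w hw₁ hw₂ using key
    set l : L := Finset.univ.sup' Finset.univ_nonempty w with hldef
    have hlS : l ∈ S := by
      obtain ⟨i0, _, hi0⟩ := Finset.exists_mem_eq_sup' Finset.univ_nonempty w
      rw [hldef, hi0]; exact hw₁ i0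
    have habs : ∀ i : Fin n, |y i v| ≤ |x i l| + ε / n := by
      intro i
      rw [hy₁ i v hS]
      have h1 : x i l ≤ sSup (x i '' S) := le_csSup (hbdd i) ⟨l, hlS, rfl⟩
      have h2 : sSup (x i '' S) ≤ x i l + ε / n := by
        have hle : x i (w i) ≤ x i l := hmono i (Finset.le_sup' w (Finset.mem_univ i))
        linarith [hw₂ i]
      exact abs_le_abs_add_of_between h1 h2
    calc ∑ i, |y i v| ≤ ∑ i, (|x i l| + ε / n) := Finset.sum_le_sum fun i _ => habs i
      _ = (∑ i, |x i l|) + ε := by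
          rw [Finset.sum_add_distrib, Finset.sum_const, Finset.card_univ, Fintype.card_fin, nsmul_eq_mul]
          have hn' : (n : ℝ) ≠ 0 := by positivity
          field_simp
      _ ≤ 1 + ε := by linarith [hsum l]
  · -- inf case
    set T : Set L := {l : L | v ≤ (l : M)} with hTdef
    have hTall : ∀ l : L, l ∈ T := by
      intro l
      by_contra h
      exact hS ⟨l, le_of_not_ge fun h' => h h'⟩
    have hTne : T.Nonempty := ⟨⟨hL.choose, hL.choose_spec⟩, hTall _⟩
    have hbdd : ∀ i : Fin n, BddBelow (x i '' T) :=
      fun i => ⟨-1, by rintro _ ⟨l, _, rfl⟩; exact (hrange i l).1⟩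
    have key : ∀ i : Fin n, ∃ l : L, x i l ≤ sInf (x i '' T) + ε / n := by
      intro i
      have h1 : sInf (x i '' T) < sInf (x i '' T) + ε / n := by linarith
      obtain ⟨a, ⟨l, hl, rfl⟩, ha⟩ := exists_lt_of_csInf_lt (hTne.image (x i)) h1
      exact ⟨l, by linarith⟩
    choose w hw₂ using key
    set l : L := Finset.univ.inf' Finset.univ_nonempty w with hldef
    have habs : ∀ i : Fin n, |y i v| ≤ |x i l| + ε / n := by
      intro i
      rw [hy₂ i v hS]
      have h1 : sInf (x i '' T) ≤ x i l := csInf_le (hbdd i) ⟨l, hTall l, rfl⟩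
      have h2 : x i l ≤ sInf (x i '' T) + ε / n := by
        have hle : x i l ≤ x i (w i) := hmono i (Finset.inf'_le w (Finset.mem_univ i))
        linarith [hw₂ i]
      have h3 : |sInf (x i '' T) - x i l| ≤ ε / n := by
        rw [abs_sub_comm, abs_of_nonneg (by linarith)]; linarith
      have h4 := abs_sub_abs_le_abs_sub (sInf (x i '' T)) (x i l)
      linarith
    calc ∑ i, |y i v| ≤ ∑ i, (|x i l| + ε / n) := Finset.sum_le_sum fun i _ => habs i
      _ = (∑ i, |x i l|) + ε := by
          rw [Finset.sum_add_distrib, Finset.sum_const, Finset.card_univ, Fintype.card_fin, nsmul_eq_mul]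
          have hn' : (n : ℝ) ≠ 0 := by positivity
          field_simp
      _ ≤ 1 + ε := by linarith [hsum l]
end

section
/- Let L be a linearly ordered set with maximum M and let L* be the set of nondecreasing functions L → [-1,1], with evaluations δ_u(x*) = x*(u). Suppose x₁ < x₂ < x₃ and x₁' < x₂' < x₃' are elements of L such that x₂' ∉ [x₁, x₃] or x₂ ∉ [x₁', x₃']. Define h = 0 ⊔ (δ_{x₁} ⊓ (δ_{x₂} − δ_{x₁} − 0.4·δ_M) ⊓ (δ_{x₃} − δ_{x₂} − 0.4·δ_M)) and h' analogously with the primed elements (all operations pointwise on ℝ^{L*}). Then h(x*) ⊓ h'(x*) = 0 for every x* ∈ L*, i.e. min(h(x*), h'(x*)) ≤ 0 for all nondecreasing x* : L → [-1,1]. -/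
/-- The elements `h`, `h'` built from two non-interlocking triples are disjoint: their pointwise
minimum vanishes at every nondecreasing `x* : L → [-1,1]`. -/
theorem disjoint_h_of_not_interlocking {L : Type*} [LinearOrder L] [OrderTop L]
    (x₁ x₂ x₃ x₁' x₂' x₃' : L)
    (h₁₂ : x₁ < x₂) (h₂₃ : x₂ < x₃) (h₁₂' : x₁' < x₂') (h₂₃' : x₂' < x₃')
    (hnot : x₂' ∉ Set.Icc x₁ x₃ ∨ x₂ ∉ Set.Icc x₁' x₃') :
    ∀ xs : L → ℝ, Monotone xs → (∀ a, xs a ∈ Set.Icc (-1 : ℝ) 1) →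
      min (max 0 (min (xs x₁)
            (min (xs x₂ - xs x₁ - 0.4 * xs ⊤) (xs x₃ - xs x₂ - 0.4 * xs ⊤))))
          (max 0 (min (xs x₁')
            (min (xs x₂' - xs x₁' - 0.4 * xs ⊤) (xs x₃' - xs x₂' - 0.4 * xs ⊤)))) = 0 := by
  intro xs hmono hbd
  refine le_antisymm ?_ (le_min (le_max_left _ _) (le_max_left _ _))
  by_contra hpos
  push_neg at hpos
  rw [lt_min_iff] at hpos
  obtain ⟨ha, hb⟩ := hpos
  rw [lt_max_iff] at ha hb
  simp only [lt_self_iff_false, false_or, lt_min_iff] at ha hb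
  obtain ⟨ha1, ha2, ha3⟩ := ha
  obtain ⟨hb1, hb2, hb3⟩ := hb
  have h3t : xs x₃ ≤ xs ⊤ := hmono le_top
  have h3t' : xs x₃' ≤ xs ⊤ := hmono le_top
  have h1t : xs x₁ ≤ xs ⊤ := hmono le_top
  rcases hnot with hn | hn
  · rw [Set.mem_Icc, not_and_or, not_le, not_le] at hn
    rcases hn with hn | hn
    · have := hmono hn.le
      linarith
    · have := hmono hn.le
      linarith
  · rw [Set.mem_Icc, not_and_or, not_le, not_le] at hn
    rcases hn with hn | hn
    · have := hmono hn.le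
      linarith
    · have := hmono hn.le
      linarith
end

section
/- Let L be a linearly ordered set with the property that for every uncountable family of triples {(x₁ⁱ, x₂ⁱ, x₃ⁱ) : i ∈ J} with x₁ⁱ < x₂ⁱ < x₃ⁱ there exist i ≠ j with x₁ⁱ ≤ x₂ʲ ≤ x₃ⁱ and x₁ʲ ≤ x₂ⁱ ≤ x₃ʲ. Then L is separable in the order topology. -/
open Set

section Aux

universe u

variable {L : Type u} [LinearOrder L]

/-- Two triples interlock. -/
private def Interlock (s t : L × L × L) : Prop :=
  (s.1 ≤ t.2.1 ∧ t.2.1 ≤ s.2.2) ∧ (t.1 ≤ s.2.1 ∧ s.2.1 ≤ t.2.2)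

private lemma interlock_symm {s t : L × L × L} (h : Interlock s t) : Interlock t s :=
  ⟨h.2, h.1⟩

end Aux

/-- If every uncountable family of increasing triples in `L` contains two interlocking triples,
then `L` is separable in its order topology. -/
theorem separable_of_triple_property {L : Type u} [LinearOrder L]
    [TopologicalSpace L] [OrderTopology L]
    (H : ∀ (J : Type u) [Uncountable J] (x₁ x₂ x₃ : J → L),
      (∀ i, x₁ i < x₂ i ∧ x₂ i < x₃ i) →
      ∃ i j, i ≠ j ∧ (x₁ i ≤ x₂ j ∧ x₂ j ≤ x₃ i) ∧ (x₁ j ≤ x₂ i ∧ x₂ i ≤ x₃ j)) :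
    TopologicalSpace.SeparableSpace L := by
  classical
  set V : Set (L × L × L) := {p | p.1 < p.2.1 ∧ p.2.1 < p.2.2} with hVdef
  set Good : Set (Set (L × L × L)) :=
    {T | T ⊆ V ∧ ∀ s ∈ T, ∀ t ∈ T, s ≠ t → ¬ Interlock s t} with hGooddef
  -- maximal non-interlocking family
  obtain ⟨F, hFmax⟩ := zorn_subset Good (by
    intro c hcS hchain
    refine ⟨⋃₀ c, ⟨?_, ?_⟩, fun s hs => subset_sUnion_of_mem hs⟩
    · intro p hp
      obtain ⟨T, hTc, hpT⟩ := hp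
      exact (hcS hTc).1 hpT
    · intro s hs t ht hst
      obtain ⟨T₁, hT₁c, hs₁⟩ := hs
      obtain ⟨T₂, hT₂c, ht₂⟩ := ht
      rcases hchain.total hT₁c hT₂c with h | h
      · exact (hcS hT₂c).2 s (h hs₁) t ht₂ hst
      · exact (hcS hT₁c).2 s hs₁ t (h ht₂) hst)
  have hFGood : F ∈ Good := hFmax.1
  -- F is countable
  have hFcount : F.Countable := by
    by_contra hunc
    rw [← Set.countable_coe_iff, not_countable_iff] at hunc
    obtain ⟨i, j, hij, h₁, h₂⟩ :=
      H (↥F) (fun i => (i : L × L × L).1) (fun i => (i : L × L × L).2.1)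
        (fun i => (i : L × L × L).2.2) (fun i => hFGood.1 i.2)
    exact hFGood.2 _ i.2 _ j.2 (fun h => hij (Subtype.ext h)) ⟨h₁, h₂⟩
  -- middles of F
  set M : Set L := (fun t : L × L × L => t.2.1) '' F with hMdef
  have hMcount : M.Countable := hFcount.image _
  -- the candidate dense set
  set D : Set L := M ∪ (⋃ x ∈ M, {y | x ⋖ y}) ∪ (⋃ x ∈ M, {y | y ⋖ x})
      ∪ {x | IsMin x} ∪ {x | IsMax x} with hDdef
  have hDcount : D.Countable := by
    have h1 : (⋃ x ∈ M, {y | x ⋖ y}).Countable :=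
      hMcount.biUnion fun x _ => Set.Subsingleton.countable fun y hy z hz => by
        by_contra hne
        rcases lt_or_gt_of_ne hne with h | h
        · exact hz.2 hy.1 h
        · exact hy.2 hz.1 h
    have h2 : (⋃ x ∈ M, {y | y ⋖ x}).Countable :=
      hMcount.biUnion fun x _ => Set.Subsingleton.countable fun y hy z hz => by
        by_contra hne
        rcases lt_or_gt_of_ne hne with h | h
        · exact hy.2 h hz.1
        · exact hz.2 h hy.1
    have h3 : {x : L | IsMin x}.Countable :=
      Set.Subsingleton.countable fun y hy z hz => le_antisymm (hy.isBot z) (hz.isBot y)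
    have h4 : {x : L | IsMax x}.Countable :=
      Set.Subsingleton.countable fun y hy z hz => le_antisymm (hz.isTop y) (hy.isTop z)
    exact ((((hMcount.union h1).union h2).union h3).union h4)
  -- key maximality consequence
  have keyA : ∀ a c b : L, a < c → c < b → ∃ x ∈ M, a ≤ x ∧ x ≤ b := by
    intro a c b hac hcb
    by_cases ht : (a, c, b) ∈ F
    · exact ⟨c, ⟨(a, c, b), ht, rfl⟩, hac.le, hcb.le⟩
    · -- F ∪ {(a,c,b)} is not good
      have hnotgood : insert (a, c, b) F ∉ Good := by
        intro hgood
        exact ht (hFmax.2 hgood (subset_insert _ _) (mem_insert _ _))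
      have hsubV : insert (a, c, b) F ⊆ V := by
        intro p hp
        rcases hp with hp | hp
        · subst hp; exact ⟨hac, hcb⟩
        · exact hFGood.1 hp
      -- extract interlocking pair
      have : ∃ s ∈ insert (a, c, b) F, ∃ t ∈ insert (a, c, b) F, s ≠ t ∧ Interlock s t := by
        by_contra hcon
        push_neg at hcon
        exact hnotgood ⟨hsubV, fun s hs t ht hst => hcon s hs t ht hst⟩
      obtain ⟨s, hs, t, htm, hst, hint⟩ := this
      rcases hs with hs | hs <;> rcases htm with htm | htm
      · subst hs; subst htm; exact absurd rfl hst
      · subst hs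
        exact ⟨t.2.1, ⟨t, htm, rfl⟩, hint.1.1, hint.1.2⟩
      · subst htm
        exact ⟨s.2.1, ⟨s, hs, rfl⟩, hint.2.1, hint.2.2⟩
      · exact absurd hint (hFGood.2 s hs t htm hst)
  have hMD : M ⊆ D := fun x hx => by
    simp only [hDdef, Set.mem_union]; tauto
  -- isolated points are in D
  have hIso : ∀ p c s : L, p ⋖ c → c ⋖ s → c ∈ D := by
    intro p c s hpc hcs
    obtain ⟨x, hxM, hpx, hxs⟩ := keyA p c s hpc.1 hcs.1
    rcases eq_or_lt_of_le hpx with h | h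
    · -- x = p, so c covers x
      refine Set.mem_union_left _ (Set.mem_union_left _ (Set.mem_union_left _
        (Set.mem_union_right _ ?_)))
      exact Set.mem_biUnion hxM (h ▸ hpc)
    · have hxc : c ≤ x := by
        by_contra hcx
        exact hpc.2 h (lt_of_not_ge hcx)
      rcases eq_or_lt_of_le hxc with h2 | h2
      · exact hMD (h2 ▸ hxM)
      · -- c < x ≤ s so x = s, c covers below x
        have hxs' : x = s := by
          by_contra hne
          exact hcs.2 h2 (lt_of_le_of_ne hxs hne)
        refine Set.mem_union_left _ (Set.mem_union_left _ (Set.mem_union_right _ ?_))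
        exact Set.mem_biUnion hxM (hxs' ▸ hcs)
  -- D meets every nonempty open interval
  have hIoo : ∀ a b : L, (Set.Ioo a b).Nonempty → ∃ d ∈ D, d ∈ Set.Ioo a b := by
    intro a b ⟨c, hc⟩
    by_cases h : ∃ c' ∈ Set.Ioo a b, (Set.Ioo a c').Nonempty ∧ (Set.Ioo c' b).Nonempty
    · obtain ⟨c', hc', ⟨a', ha'⟩, ⟨b', hb'⟩⟩ := h
      obtain ⟨x, hxM, hx1, hx2⟩ := keyA a' c' b' ha'.2 hb'.1
      exact ⟨x, hMD hxM, lt_of_lt_of_le ha'.1 hx1, lt_of_le_of_lt hx2 hb'.2⟩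
    · have h' : ∀ c' ∈ Set.Ioo a b, ¬((Set.Ioo a c').Nonempty ∧ (Set.Ioo c' b).Nonempty) :=
        fun c' hc' hboth => h ⟨c', hc', hboth⟩
      by_cases h1 : (Set.Ioo a c).Nonempty
      · -- then Ioo c b = ∅
        obtain ⟨c'', hc''⟩ := h1
        have hIcb : ¬(Set.Ioo c b).Nonempty := by
          intro hne
          exact h' c hc ⟨⟨c'', hc''⟩, hne⟩
        -- c'' ∈ Ioo a b, Ioo a c'' ∋? : show Ioo a c'' and Ioo c'' c empty
        have hc''ab : c'' ∈ Set.Ioo a b := ⟨hc''.1, hc''.2.trans hc.2⟩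
        have hac'' : ¬(Set.Ioo a c'').Nonempty := fun hne =>
          h' c'' hc''ab ⟨hne, ⟨c, hc''.2, hc.2⟩⟩
        have hc''c : ¬(Set.Ioo c'' c).Nonempty := by
          rintro ⟨d, hd⟩
          exact h' d ⟨hc''.1.trans hd.1, hd.2.trans hc.2⟩ ⟨⟨c'', hc''.1, hd.1⟩, ⟨c, hd.2, hc.2⟩⟩
        have cov1 : a ⋖ c'' := ⟨hc''.1, fun z hz hz' => hac'' ⟨z, hz, hz'⟩⟩
        have cov2 : c'' ⋖ c := ⟨hc''.2, fun z hz hz' => hc''c ⟨z, hz, hz'⟩⟩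
        exact ⟨c'', hIso a c'' c cov1 cov2, hc''ab⟩
      · by_cases h2 : (Set.Ioo c b).Nonempty
        · obtain ⟨c', hc'⟩ := h2
          have hc'ab : c' ∈ Set.Ioo a b := ⟨hc.1.trans hc'.1, hc'.2⟩
          have hc'b : ¬(Set.Ioo c' b).Nonempty := fun hne =>
            h' c' hc'ab ⟨⟨c, hc.1, hc'.1⟩, hne⟩
          have hcc' : ¬(Set.Ioo c c').Nonempty := by
            rintro ⟨d, hd⟩
            exact h' d ⟨hc.1.trans hd.1, hd.2.trans hc'.2⟩ ⟨⟨c, hc.1, hd.1⟩, ⟨c', hd.2, hc'.2⟩⟩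
          have cov1 : c ⋖ c' := ⟨hc'.1, fun z hz hz' => hcc' ⟨z, hz, hz'⟩⟩
          have cov2 : c' ⋖ b := ⟨hc'.2, fun z hz hz' => hc'b ⟨z, hz, hz'⟩⟩
          exact ⟨c', hIso c c' b cov1 cov2, hc'ab⟩
        · -- both sides empty: c is isolated
          have cov1 : a ⋖ c := ⟨hc.1, fun z hz hz' => h1 ⟨z, hz, hz'⟩⟩
          have cov2 : c ⋖ b := ⟨hc.2, fun z hz hz' => h2 ⟨z, hz, hz'⟩⟩
          exact ⟨c, hIso a c b cov1 cov2, hc⟩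
  -- D is dense
  have hdense : Dense D := by
    intro p
    rw [mem_closure_iff_nhds]
    intro U hU
    by_cases hl : ∃ l : L, l < p
    · by_cases hu : ∃ u : L, p < u
      · obtain ⟨l, u, hp, hsub⟩ := (mem_nhds_iff_exists_Ioo_subset' hl hu).1 hU
        obtain ⟨d, hdD, hd⟩ := hIoo l u ⟨p, hp⟩
        exact ⟨d, hsub hd, hdD⟩
      · -- p is max
        have hpmax : IsMax p := fun z _ => le_of_not_gt fun hz => hu ⟨z, hz⟩
        obtain ⟨l, hlp, hsub⟩ := exists_Ioc_subset_of_mem_nhds hU hl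
        by_cases hne : (Set.Ioo l p).Nonempty
        · obtain ⟨d, hdD, hd⟩ := hIoo l p hne
          exact ⟨d, hsub ⟨hd.1, hd.2.le⟩, hdD⟩
        · have : p ∈ D := Set.mem_union_right _ hpmax
          exact ⟨p, hsub ⟨hlp, le_refl p⟩, this⟩
    · have hpmin : IsMin p := fun z _ => le_of_not_gt fun hz => hl ⟨z, hz⟩
      have hpD : p ∈ D := Set.mem_union_left _ (Set.mem_union_right _ hpmin)
      by_cases hu : ∃ u : L, p < u
      · obtain ⟨u, hpu, hsub⟩ := exists_Ico_subset_of_mem_nhds hU hu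
        exact ⟨p, hsub ⟨le_refl p, hpu⟩, hpD⟩
      · exact ⟨p, mem_of_mem_nhds hU, hpD⟩
  exact ⟨⟨D, hDcount, hdense⟩⟩
end

section
/- Let L be a set and for f : [-1,1]^L → ℝ define ‖f‖ = sup { Σ_{i=1}^n |f(x_i*)| : n ∈ ℕ, x_1*, …, x_n* ∈ [-1,1]^L, sup_{x ∈ L} Σ_{i=1}^n |x_i*(x)| ≤ 1 }. Then the set H of all f with ‖f‖ < ∞ is a vector lattice under pointwise operations, and ‖·‖ is a lattice norm on H (i.e., a norm satisfying ‖f‖ ≤ ‖g‖ whenever |f| ≤ |g| pointwise). -/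
open Pointwise


/-- The set of admissible sums defining the free-Banach-lattice norm of a function
`f : [-1,1]^L → ℝ`. -/
def fblNormSet (L : Type u) (f : (L → Set.Icc (-1 : ℝ) 1) → ℝ) : Set ℝ :=
  {s | ∃ (n : ℕ) (xs : Fin n → L → Set.Icc (-1 : ℝ) 1),
    (∀ x : L, ∑ i, |((xs i x : ℝ))| ≤ 1) ∧ s = ∑ i, |f (xs i)|}

/-- The free-Banach-lattice norm of `f : [-1,1]^L → ℝ`. -/
noncomputable def fblNorm (L : Type u) (f : (L → Set.Icc (-1 : ℝ) 1) → ℝ) : ℝ :=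
  sSup (fblNormSet L f)

/-- `f` has finite norm. -/
def fblMemH (L : Type u) (f : (L → Set.Icc (-1 : ℝ) 1) → ℝ) : Prop :=
  BddAbove (fblNormSet L f)

lemma fbl_zero_mem (L : Type u) (f : (L → Set.Icc (-1:ℝ) 1) → ℝ) :
    (0:ℝ) ∈ fblNormSet L f :=
  ⟨0, Fin.elim0, by simp, by simp⟩

lemma fbl_norm_nonneg (L : Type u) (f : (L → Set.Icc (-1:ℝ) 1) → ℝ)
    (hf : fblMemH L f) : 0 ≤ fblNorm L f :=
  le_csSup hf (fbl_zero_mem L f)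

lemma fbl_dom (L : Type u) (f g : (L → Set.Icc (-1:ℝ) 1) → ℝ)
    (hg : fblMemH L g) (hfg : ∀ xs, |f xs| ≤ |g xs|) :
    fblMemH L f ∧ fblNorm L f ≤ fblNorm L g := by
  have key : ∀ s ∈ fblNormSet L f, s ≤ fblNorm L g := by
    rintro s ⟨n, xs, hadm, rfl⟩
    calc ∑ i, |f (xs i)| ≤ ∑ i, |g (xs i)| := Finset.sum_le_sum fun i _ => hfg (xs i)
    _ ≤ _ := le_csSup hg ⟨n, xs, hadm, rfl⟩
  exact ⟨⟨_, key⟩, csSup_le ⟨0, fbl_zero_mem L f⟩ key⟩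

lemma fbl_add_bound (L : Type u) (f g : (L → Set.Icc (-1:ℝ) 1) → ℝ)
    (hf : fblMemH L f) (hg : fblMemH L g) :
    ∀ s ∈ fblNormSet L (fun xs => |f xs| + |g xs|), s ≤ fblNorm L f + fblNorm L g := by
  rintro s ⟨n, xs, hadm, rfl⟩
  have h1 : ∑ i, |f (xs i)| ≤ fblNorm L f := le_csSup hf ⟨n, xs, hadm, rfl⟩
  have h2 : ∑ i, |g (xs i)| ≤ fblNorm L g := le_csSup hg ⟨n, xs, hadm, rfl⟩
  have heq : ∀ i ∈ Finset.univ, |(fun xs => |f xs| + |g xs|) (xs i)| = |f (xs i)| + |g (xs i)| := by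
    intro i _
    simp only
    exact abs_of_nonneg (by positivity)
  rw [Finset.sum_congr rfl heq, Finset.sum_add_distrib]
  exact add_le_add h1 h2

lemma fbl_abs_add_mem (L : Type u) (f g : (L → Set.Icc (-1:ℝ) 1) → ℝ)
    (hf : fblMemH L f) (hg : fblMemH L g) :
    fblMemH L (fun xs => |f xs| + |g xs|) :=
  ⟨_, fbl_add_bound L f g hf hg⟩

/-- The set `H` of functions `f : [-1,1]^L → ℝ` with `‖f‖ < ∞` is a vector lattice under
pointwise operations and `‖·‖` is a lattice norm on it. -/
theorem fbl_H_is_normed_vector_lattice (L : Type u) :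
    (∀ f g, fblMemH L f → fblMemH L g →
      fblMemH L (f + g) ∧ fblNorm L (f + g) ≤ fblNorm L f + fblNorm L g) ∧
    (∀ (c : ℝ) f, fblMemH L f →
      fblMemH L (c • f) ∧ fblNorm L (c • f) = |c| * fblNorm L f) ∧
    (∀ f g, fblMemH L f → fblMemH L g → fblMemH L (f ⊔ g) ∧ fblMemH L (f ⊓ g)) ∧
    (∀ f, fblMemH L f → (fblNorm L f = 0 ↔ f = 0)) ∧
    (∀ f g, fblMemH L g → (∀ xs, |f xs| ≤ |g xs|) →
      fblMemH L f ∧ fblNorm L f ≤ fblNorm L g) := by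
  refine ⟨?_, ?_, ?_, ?_, fun f g hg hfg => fbl_dom L f g hg hfg⟩
  · -- additivity
    intro f g hf hg
    have habs := fbl_abs_add_mem L f g hf hg
    have hdom : ∀ xs, |(f + g) xs| ≤ |(fun xs => |f xs| + |g xs|) xs| := by
      intro xs
      simp only [Pi.add_apply]
      calc |f xs + g xs| ≤ |f xs| + |g xs| := abs_add_le _ _
      _ ≤ |(|f xs| + |g xs|)| := le_abs_self _
    obtain ⟨hmem, hle⟩ := fbl_dom L (f + g) _ habs hdom
    refine ⟨hmem, hle.trans ?_⟩
    exact csSup_le ⟨0, fbl_zero_mem L _⟩ (fbl_add_bound L f g hf hg)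
  · -- scalar
    intro c f hf
    have hset : fblNormSet L (c • f) = (fun s => |c| * s) '' fblNormSet L f := by
      ext s
      constructor
      · rintro ⟨n, xs, hadm, rfl⟩
        refine ⟨∑ i, |f (xs i)|, ⟨n, xs, hadm, rfl⟩, ?_⟩
        simp [Finset.mul_sum, abs_mul]
      · rintro ⟨t, ⟨n, xs, hadm, rfl⟩, rfl⟩
        refine ⟨n, xs, hadm, ?_⟩
        simp [Finset.mul_sum, abs_mul]
    constructor
    · rw [fblMemH, hset]
      obtain ⟨B, hB⟩ := hf
      refine ⟨|c| * B, ?_⟩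
      rintro _ ⟨t, ht, rfl⟩
      exact mul_le_mul_of_nonneg_left (hB ht) (abs_nonneg c)
    · have h2 : (fun s => |c| * s) '' fblNormSet L f = |c| • fblNormSet L f := rfl
      rw [fblNorm, hset, h2, Real.sSup_smul_of_nonneg (abs_nonneg c), smul_eq_mul, fblNorm]
  · -- lattice
    intro f g hf hg
    have habs := fbl_abs_add_mem L f g hf hg
    constructor
    · refine (fbl_dom L (f ⊔ g) _ habs fun xs => ?_).1
      simp only [Pi.sup_apply]
      rw [abs_of_nonneg (by positivity : (0:ℝ) ≤ |f xs| + |g xs|)]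
      rcases le_total (f xs) (g xs) with h | h
      · rw [max_eq_right h]
        linarith [abs_nonneg (f xs)]
      · rw [max_eq_left h]
        linarith [abs_nonneg (g xs)]
    · refine (fbl_dom L (f ⊓ g) _ habs fun xs => ?_).1
      simp only [Pi.inf_apply]
      rw [abs_of_nonneg (by positivity : (0:ℝ) ≤ |f xs| + |g xs|)]
      rcases le_total (f xs) (g xs) with h | h
      · rw [min_eq_left h]
        linarith [abs_nonneg (g xs)]
      · rw [min_eq_right h]
        linarith [abs_nonneg (f xs)]
  · -- norm zero iff
    intro f hf
    constructor
    · intro h0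
      by_contra hne
      have : ∃ xs, f xs ≠ 0 := by
        by_contra h
        push_neg at h
        exact hne (funext fun xs => h xs)
      obtain ⟨xs0, hxs0⟩ := this
      have hmem : |f xs0| ∈ fblNormSet L f := by
        refine ⟨1, fun _ => xs0, fun x => ?_, by simp⟩
        simp only [Finset.sum_const, Finset.card_univ, Fintype.card_fin, one_smul,
          Fin.sum_univ_one]
        exact abs_le.2 ⟨(xs0 x).2.1, (xs0 x).2.2⟩
      have := le_csSup hf hmem
      rw [← fblNorm, h0] at this
      exact absurd (le_antisymm this (abs_nonneg _)) (abs_ne_zero.2 hxs0)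
    · rintro rfl
      refine le_antisymm (csSup_le ⟨0, fbl_zero_mem L _⟩ ?_) (fbl_norm_nonneg L _ hf)
      rintro s ⟨n, xs, hadm, rfl⟩
      simp
end

section
/- Let L be a linear order, and for x₁, …, x_n ∈ L and open intervals I₁, …, I_n with rational endpoints, let U(x₁,I₁,…,x_n,I_n) = {x* ∈ L* : x*(xᵢ) ∈ Iᵢ for all i}, where L* is the set of nondecreasing functions L → [-1,1] with the product (pointwise convergence) topology. Then the family W of sets U(x₁,I₁,…,x_n,I_n) with x₁ < x₂ < … < x_n and sup I₁ < inf I₂, sup I₂ < inf I₃, …, sup I_{n-1} < inf I_n is a π-basis of L*: every nonempty open subset of L* contains a nonempty member of W. -/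
/-- The nondecreasing functions `L → [-1,1]`, with the topology of pointwise convergence. -/
abbrev LStar (L : Type*) [Preorder L] :=
  {f : L → ℝ // Monotone f ∧ ∀ a, f a ∈ Set.Icc (-1 : ℝ) 1}

/-- The basic set `U(x₁,I₁,…,x_n,I_n)` determined by points `x i` and rational open
intervals `(p i, q i)`. -/
def USet {L : Type*} [Preorder L] {n : ℕ} (x : Fin n → L) (p q : Fin n → ℚ) :
    Set (LStar L) :=
  {g | ∀ i, g.1 (x i) ∈ Set.Ioo ((p i : ℝ)) ((q i : ℝ))}

/-- The sets `U(x₁,I₁,…,x_n,I_n)` with `x₁ < ⋯ < x_n` and `I₁ < ⋯ < I_n` form a π-basis of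
`L*`: every nonempty open subset contains a nonempty such set. -/
theorem uSets_pi_basis {L : Type*} [LinearOrder L]
    (O : Set (LStar L)) (hO : IsOpen O) (hne : O.Nonempty) :
    ∃ (n : ℕ) (x : Fin n → L) (p q : Fin n → ℚ), StrictMono x ∧
      (∀ i j, i < j → q i < p j) ∧ (USet x p q).Nonempty ∧ USet x p q ⊆ O := by
  obtain ⟨f, hf⟩ := hne
  rw [isOpen_induced_iff] at hO
  obtain ⟨V, hV, rfl⟩ := hO
  rw [isOpen_pi_iff] at hV
  obtain ⟨I, u, hu, hpi⟩ := hV f.1 hf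
  rcases I.eq_empty_or_nonempty with rfl | hI
  · refine ⟨0, Fin.elim0, Fin.elim0, Fin.elim0, fun i => i.elim0, fun i => i.elim0,
      ⟨f, fun i => i.elim0⟩, ?_⟩
    intro g _
    exact hpi (fun a ha => absurd ha (by simp))
  -- a uniform ε working for all coordinates in I
  obtain ⟨ε, hε, hba⟩ : ∃ ε > 0, ∀ a ∈ I, Metric.ball (f.1 a) ε ⊆ u a := by
    have hball : ∀ a ∈ I, ∃ d > 0, Metric.ball (f.1 a) d ⊆ u a :=
      fun a ha => Metric.isOpen_iff.1 (hu a ha).1 _ (hu a ha).2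
    choose! εa hεa hba using hball
    refine ⟨I.inf' hI εa, ?_, ?_⟩
    · rw [gt_iff_lt, Finset.lt_inf'_iff]; exact fun a ha => hεa a ha
    · intro a ha
      exact le_trans (Metric.ball_subset_ball (Finset.inf'_le εa ha)) (hba a ha)
  -- the sorted points of I
  obtain ⟨n, hnpos, x, hx, hxmem, hxsurj⟩ :
      ∃ (n : ℕ), 0 < n ∧ ∃ x : Fin n → L, StrictMono x ∧ (∀ k, x k ∈ I) ∧
        ∀ a ∈ I, ∃ k, x k = a := by
    refine ⟨I.card, Finset.card_pos.2 hI, fun k => I.orderEmbOfFin rfl k,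
      (I.orderEmbOfFin rfl).strictMono, fun k => I.orderEmbOfFin_mem rfl k, ?_⟩
    intro a ha
    have hr := I.range_orderEmbOfFin (rfl : I.card = I.card)
    have : a ∈ Set.range (I.orderEmbOfFin (rfl : I.card = I.card)) := by
      rw [hr]; exact_mod_cast ha
    exact this
  have hn0 : (0:ℝ) < (n:ℝ) := by exact_mod_cast hnpos
  have hfbd : ∀ a, -1 ≤ f.1 a ∧ f.1 a ≤ 1 := fun a => ⟨(f.2.2 a).1, (f.2.2 a).2⟩
  -- a monotone perturbation h of f, strictly increasing along x, ε/2-close to f on x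
  obtain ⟨h, hmono, hbdd, hvmono, hvclose⟩ :
      ∃ h : L → ℝ, Monotone h ∧ (∀ a, h a ∈ Set.Icc (-1:ℝ) 1) ∧
        StrictMono (fun k => h (x k)) ∧
        ∀ k, f.1 (x k) - ε/2 ≤ h (x k) ∧ h (x k) ≤ f.1 (x k) + ε/2 := by
    obtain ⟨δ, hδpos, hδ1, hδε⟩ : ∃ δ : ℝ, 0 < δ ∧ δ ≤ 1/2 ∧ δ ≤ ε/4 :=
      ⟨min (ε/4) (1/2), lt_min (by linarith) (by norm_num), min_le_right _ _,
        min_le_left _ _⟩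
    obtain ⟨μ, hμpos, hμn⟩ : ∃ μ : ℝ, 0 < μ ∧ μ * n = δ :=
      ⟨δ / n, div_pos hδpos hn0, div_mul_cancel₀ _ (ne_of_gt hn0)⟩
    set c : L → ℕ := fun a => (I.filter (· ≤ a)).card with hcdef
    have hcmono : ∀ ⦃a b : L⦄, a ≤ b → c a ≤ c b := by
      intro a b hab
      apply Finset.card_le_card
      intro y hy
      simp only [hcdef, Finset.mem_filter] at *
      exact ⟨hy.1, hy.2.trans hab⟩
    have hcle : ∀ a, (c a : ℝ) ≤ n := by
      intro a
      have : c a ≤ I.card := Finset.card_le_card (Finset.filter_subset _ _)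
      have h2 : I.card ≤ n := by
        obtain ⟨k, hk⟩ := hxsurj _ hI.choose_spec
        -- card I ≤ n since x : Fin n → L is injective onto I
        have hinj : Function.Injective x := hx.injective
        have : I ⊆ Finset.image x Finset.univ := by
          intro a ha
          obtain ⟨k, rfl⟩ := hxsurj a ha
          exact Finset.mem_image.2 ⟨k, Finset.mem_univ _, rfl⟩
        calc I.card ≤ (Finset.image x Finset.univ).card := Finset.card_le_card this
          _ ≤ (Finset.univ : Finset (Fin n)).card := Finset.card_image_le
          _ = n := by simp
      have := le_trans this h2
      exact_mod_cast this
    have hcnn : ∀ a, (0:ℝ) ≤ (c a : ℝ) := fun a => Nat.cast_nonneg _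
    refine ⟨fun a => (1 - δ) * f.1 a + μ * (2 * (c a : ℝ) - n), ?_, ?_, ?_, ?_⟩
    · intro a b hab
      have h1 : f.1 a ≤ f.1 b := f.2.1 hab
      have h2 : (c a : ℝ) ≤ (c b : ℝ) := by exact_mod_cast hcmono hab
      have e1 : (1 - δ) * f.1 a ≤ (1 - δ) * f.1 b :=
        mul_le_mul_of_nonneg_left h1 (by linarith)
      have e2 : μ * (2 * (c a : ℝ) - n) ≤ μ * (2 * (c b : ℝ) - n) :=
        mul_le_mul_of_nonneg_left (by linarith) hμpos.le
      dsimp only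
      linarith
    · intro a
      obtain ⟨h1, h2⟩ := hfbd a
      have e1 : (1 - δ) * f.1 a ≤ (1 - δ) * 1 := mul_le_mul_of_nonneg_left h2 (by linarith)
      have e1' : (1 - δ) * (-1) ≤ (1 - δ) * f.1 a := mul_le_mul_of_nonneg_left h1 (by linarith)
      have e2 : μ * (2 * (c a : ℝ) - n) ≤ μ * n :=
        mul_le_mul_of_nonneg_left (by linarith [hcle a]) hμpos.le
      have e2' : μ * (-(n:ℝ)) ≤ μ * (2 * (c a : ℝ) - n) :=
        mul_le_mul_of_nonneg_left (by linarith [hcnn a]) hμpos.le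
      have e3 : μ * (-(n:ℝ)) = -δ := by rw [mul_neg, hμn]
      constructor <;> dsimp only <;> nlinarith [hμn]
    · intro k k' hkk'
      have h1 : f.1 (x k) ≤ f.1 (x k') := f.2.1 (hx hkk').le
      have h2 : c (x k) < c (x k') := by
        apply Finset.card_lt_card
        rw [Finset.ssubset_iff_of_subset]
        · refine ⟨x k', ?_, ?_⟩
          · simp only [hcdef, Finset.mem_filter]
            exact ⟨hxmem k', le_refl _⟩
          · simp only [hcdef, Finset.mem_filter, not_and]
            exact fun _ => not_le.2 (hx hkk')
        · intro y hy
          simp only [hcdef, Finset.mem_filter] at *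
          exact ⟨hy.1, hy.2.trans (hx hkk').le⟩
      have h2' : (c (x k) : ℝ) + 1 ≤ (c (x k') : ℝ) := by exact_mod_cast h2
      have e1 : (1 - δ) * f.1 (x k) ≤ (1 - δ) * f.1 (x k') :=
        mul_le_mul_of_nonneg_left h1 (by linarith)
      have e2 : μ * (2 * (c (x k) : ℝ) - n + 2) ≤ μ * (2 * (c (x k') : ℝ) - n) :=
        mul_le_mul_of_nonneg_left (by linarith) hμpos.le
      dsimp only
      nlinarith [hμpos]
    · intro k
      obtain ⟨h1, h2⟩ := hfbd (x k)
      have e2 : μ * (2 * (c (x k) : ℝ) - n) ≤ μ * n :=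
        mul_le_mul_of_nonneg_left (by linarith [hcle (x k)]) hμpos.le
      have e2' : μ * (-(n:ℝ)) ≤ μ * (2 * (c (x k) : ℝ) - n) :=
        mul_le_mul_of_nonneg_left (by linarith [hcnn (x k)]) hμpos.le
      have e3 : μ * (-(n:ℝ)) = -δ := by rw [mul_neg, hμn]
      have e4 : δ * f.1 (x k) ≤ δ := by nlinarith
      have e4' : -δ ≤ δ * f.1 (x k) := by nlinarith
      constructor <;> dsimp only <;> nlinarith [hμn]
  -- the separation constant
  obtain ⟨d, hd, hdle⟩ : ∃ d > 0, ∀ i j : Fin n, i < j → h (x i) + d ≤ h (x j) := by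
    set P : Finset (Fin n × Fin n) := Finset.univ.filter (fun ij => ij.1 < ij.2) with hPdef
    rcases P.eq_empty_or_nonempty with hP | hP
    · refine ⟨1, one_pos, fun i j hij => ?_⟩
      have : (i, j) ∈ P := by simp [hPdef, hij]
      rw [hP] at this
      simp at this
    · refine ⟨P.inf' hP (fun ij => h (x ij.2) - h (x ij.1)), ?_, ?_⟩
      · rw [gt_iff_lt, Finset.lt_inf'_iff]
        intro ij hij
        have h1 : ij.1 < ij.2 := (Finset.mem_filter.1 hij).2
        have := hvmono h1
        simp only at this
        linarith
      · intro i j hij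
        have hmem : (i, j) ∈ P := by simp [hPdef, hij]
        have := Finset.inf'_le (fun ij : Fin n × Fin n => h (x ij.2) - h (x ij.1)) hmem
        simp only at this
        linarith
  obtain ⟨ρ, hρpos, hρε, hρd⟩ : ∃ ρ : ℝ, 0 < ρ ∧ ρ ≤ ε/2 ∧ ρ ≤ d/2 :=
    ⟨min (ε/2) (d/2), lt_min (by linarith) (by linarith), min_le_left _ _, min_le_right _ _⟩
  -- rational endpoints
  have hpex : ∀ k, ∃ r : ℚ, h (x k) - ρ < (r:ℝ) ∧ (r:ℝ) < h (x k) :=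
    fun k => exists_rat_btwn (by linarith)
  choose p hp1 hp2 using hpex
  have hqex : ∀ k, ∃ r : ℚ, h (x k) < (r:ℝ) ∧ (r:ℝ) < h (x k) + ρ :=
    fun k => exists_rat_btwn (by linarith)
  choose q hq1 hq2 using hqex
  refine ⟨n, x, p, q, hx, ?_, ⟨⟨h, hmono, hbdd⟩, fun k => ⟨hp2 k, hq1 k⟩⟩, ?_⟩
  · intro i j hij
    have h1 := hq2 i
    have h2 := hp1 j
    have h3 := hdle i j hij
    have : (q i : ℝ) < (p j : ℝ) := by linarith
    exact_mod_cast this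
  · intro g hg
    show g.1 ∈ V
    refine hpi (fun a ha => ?_)
    obtain ⟨k, rfl⟩ := hxsurj a (Finset.mem_coe.1 ha)
    apply hba _ (Finset.mem_coe.1 ha)
    obtain ⟨hgk1, hgk2⟩ := hg k
    obtain ⟨hv1, hv2⟩ := hvclose k
    have h1 := hp1 k
    have h2 := hq2 k
    rw [Metric.mem_ball, Real.dist_eq, abs_lt]
    constructor
    · linarith
    · linarith
end
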